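/- There exists a constant 𝓜_e ≥ 1, depending only on β_e, D_{3,2}, γ, Ω, such that the operator norm of exp(𝓛τ) is bounded by 𝓜_e uniformly for all τ ∈ ℝ, where 𝓛 is the matrix with rows (0,0,ā), (0,0,b̄), (2β_e γ, 2β_e Ω, 0), ā = -D_{3,2}Ω - β_e γ, b̄ = D_{3,2}γ - β_e Ω, γ² + Ω² = 1, β_e > 0. -/

import Mathlib

/-!
Since `γ ā + Ω b̄ = -β_e`, in the coordinates `(γ x + Ω y, z / √2, b̄ x - ā y)` the matrix `𝓛`
becomes the skew-symmetric generator of rotations with angular speed `√2 β_e` in the first two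
coordinates. Hence `exp(τ𝓛)` is conjugate, by one fixed matrix, to an orthogonal matrix, and
orthogonal matrices have entries bounded by `1`.
-/

open Matrix

namespace Matrix

variable {n : Type*} [Fintype n] [DecidableEq n]

theorem exp_mem_orthogonalGroup_of_transpose_eq_neg {S : Matrix n n ℝ} (hS : Sᵀ = -S) :
    NormedSpace.exp S ∈ orthogonalGroup n ℝ := by
  rw [mem_orthogonalGroup_iff', ← exp_transpose, hS, exp_neg]
  exact nonsing_inv_mul _ ((isUnit_iff_isUnit_det _).mp (isUnit_exp S))

open scoped Norms.Operator in
theorem linfty_opNorm_le_card_of_mem_orthogonalGroup {U : Matrix n n ℝ}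
    (hU : U ∈ orthogonalGroup n ℝ) : ‖U‖ ≤ Fintype.card n := by
  rw [← NNReal.coe_natCast, ← coe_nnnorm, NNReal.coe_le_coe, linfty_opNNNorm_def]
  refine Finset.sup_le fun i _ => ?_
  calc ∑ j, ‖U i j‖₊ ≤ ∑ _j : n, 1 :=
        Finset.sum_le_sum fun j _ => entry_norm_bound_of_unitary hU i j
    _ = Fintype.card n := by simp

theorem exp_smul_eq_of_intertwining {L P Q S : Matrix n n ℝ} (hQP : Q * P = 1)
    (hPL : P * L = S * P) (τ : ℝ) :
    NormedSpace.exp (τ • L) = Q * NormedSpace.exp (τ • S) * P := by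
  let U : (Matrix n n ℝ)ˣ := ⟨P, Q, mul_eq_one_comm.mp hQP, hQP⟩
  have hL : L = Q * S * P := by
    rw [mul_assoc, ← hPL, ← mul_assoc, hQP, one_mul]
  simpa [U, hL, Matrix.mul_smul, Matrix.smul_mul] using exp_units_conj' U (τ • S)

open scoped Norms.Operator in
theorem exists_bound_exp_smul_mulVec_of_intertwining_skew {L P Q S : Matrix n n ℝ}
    (hQP : Q * P = 1) (hPL : P * L = S * P) (hS : Sᵀ = -S) :
    ∃ M : ℝ, 1 ≤ M ∧ ∀ τ : ℝ, ∀ v : n → ℝ, ‖NormedSpace.exp (τ • L) *ᵥ v‖ ≤ M * ‖v‖ := by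
  refine ⟨max 1 (‖Q‖ * Fintype.card n * ‖P‖), le_max_left _ _, fun τ v => ?_⟩
  have hexp : ‖NormedSpace.exp (τ • S)‖ ≤ Fintype.card n :=
    linfty_opNorm_le_card_of_mem_orthogonalGroup
      (exp_mem_orthogonalGroup_of_transpose_eq_neg (by rw [transpose_smul, hS, smul_neg]))
  calc ‖NormedSpace.exp (τ • L) *ᵥ v‖ ≤ ‖NormedSpace.exp (τ • L)‖ * ‖v‖ :=
        linfty_opNorm_mulVec _ _
    _ ≤ ‖Q‖ * Fintype.card n * ‖P‖ * ‖v‖ := by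
      rw [exp_smul_eq_of_intertwining hQP hPL]
      gcongr
      refine (norm_mul_le _ _).trans ?_
      gcongr
      exact (norm_mul_le _ _).trans (by gcongr)
    _ ≤ max 1 (‖Q‖ * Fintype.card n * ‖P‖) * ‖v‖ := by gcongr; exact le_max_right _ _

end Matrix

theorem exp_expulsion_matrix_uniformly_bounded_general (βe D32 γ Ω : ℝ)
    (hβe : 0 < βe) (hcirc : γ ^ 2 + Ω ^ 2 = 1)
    (abar bbar : ℝ) (ha : abar = -D32 * Ω - βe * γ) (hb : bbar = D32 * γ - βe * Ω)
    (L : Matrix (Fin 3) (Fin 3) ℝ)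
    (hL : L = !![0, 0, abar; 0, 0, bbar; 2 * βe * γ, 2 * βe * Ω, 0]) :
    ∃ Me : ℝ, 1 ≤ Me ∧ ∀ τ : ℝ, ∀ v : Fin 3 → ℝ,
      ‖(NormedSpace.exp (τ • L)).mulVec v‖ ≤ Me * ‖v‖ := by
  have hkey : γ * abar + Ω * bbar = -βe := by
    rw [ha, hb]; linear_combination -βe * hcirc
  have hsqrt : √2 ^ 2 = 2 := Real.sq_sqrt zero_le_two
  subst hL
  refine exists_bound_exp_smul_mulVec_of_intertwining_skew
    (P := !![γ, Ω, 0; 0, 0, (√2)⁻¹; bbar, -abar, 0])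
    (Q := !![-abar / βe, 0, -Ω / βe; -bbar / βe, 0, γ / βe; 0, √2, 0])
    (S := (√2 * βe) • !![0, -1, 0; 1, 0, 0; 0, 0, 0]) ?_ ?_ ?_
  all_goals ext i j; fin_cases i <;> fin_cases j <;> simp [mul_apply, Fin.sum_univ_three] <;> grind

/-- There exists `𝓜_e ≥ 1`, depending only on `β_e, D_{3,2}, γ, Ω`, bounding the operator
norm of `exp(𝓛τ)` uniformly in `τ ∈ ℝ`. -/
theorem exp_expulsion_matrix_uniformly_bounded (βe D32 γ Ω : ℝ)
    (hβe : 0 < βe) (hD32 : 0 < D32) (hcirc : γ ^ 2 + Ω ^ 2 = 1)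
    (abar bbar : ℝ) (ha : abar = -D32 * Ω - βe * γ) (hb : bbar = D32 * γ - βe * Ω)
    (L : Matrix (Fin 3) (Fin 3) ℝ)
    (hL : L = !![0, 0, abar; 0, 0, bbar; 2 * βe * γ, 2 * βe * Ω, 0]) :
    ∃ Me : ℝ, 1 ≤ Me ∧ ∀ τ : ℝ, ∀ v : Fin 3 → ℝ,
      ‖(NormedSpace.exp (τ • L)).mulVec v‖ ≤ Me * ‖v‖ :=
  exp_expulsion_matrix_uniformly_bounded_general βe D32 γ Ω hβe hcirc abar bbar ha hb L hL
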